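/- The product H₁(F)·H₂(F) for the Fermat cubic equals, up to a nonzero scalar, xyz·(x^3-y^3)·(y^3-z^3)·(z^3-x^3), whose zero locus is the extended Fermat arrangement of 12 lines. -/

import Mathlib

open MvPolynomial

noncomputable section

/-- The Fermat cubic `x³ + y³ + z³`. -/
def Fer : MvPolynomial (Fin 3) ℂ := X 0 ^ 3 + X 1 ^ 3 + X 2 ^ 3

/-- Second partial derivative `∂²Fer/∂xᵢ∂xⱼ`. -/
def D (i j : Fin 3) : MvPolynomial (Fin 3) ℂ := pderiv i (pderiv j Fer)

/-- The Hessian determinant `H = H(Fer)`. -/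
def Hdet : MvPolynomial (Fin 3) ℂ :=
  (Matrix.of fun i j : Fin 3 => pderiv i (pderiv j Fer)).det

/-- The 3×3 "Jacobian" determinant with rows the gradients of `f`, `g` and the row `r`. -/
def JacRow (f g : MvPolynomial (Fin 3) ℂ) (r : Fin 3 → MvPolynomial (Fin 3) ℂ) :
    MvPolynomial (Fin 3) ℂ :=
  (Matrix.of fun i j : Fin 3 => ![pderiv j f, pderiv j g, r j] i).det

/-- The six entries of the adjugate of the Hessian matrix of `Fer`
(in the order used by Cayley). -/
def AdjVec : Fin 6 → MvPolynomial (Fin 3) ℂ :=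
  ![D 1 1 * D 2 2 - D 1 2 ^ 2,
    D 0 0 * D 2 2 - D 0 2 ^ 2,
    D 0 0 * D 1 1 - D 0 1 ^ 2,
    D 0 1 * D 0 2 - D 0 0 * D 1 2,
    D 0 1 * D 1 2 - D 1 1 * D 0 2,
    D 0 2 * D 1 2 - D 2 2 * D 0 1]

/-- The six entries `(H_xx, H_yy, H_zz, 2H_yz, 2H_xz, 2H_xy)` of the Hessian of `H`. -/
def HVec : Fin 6 → MvPolynomial (Fin 3) ℂ :=
  ![pderiv 0 (pderiv 0 Hdet), pderiv 1 (pderiv 1 Hdet), pderiv 2 (pderiv 2 Hdet),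
    2 * pderiv 1 (pderiv 2 Hdet), 2 * pderiv 0 (pderiv 2 Hdet), 2 * pderiv 0 (pderiv 1 Hdet)]

/-- Cayley's bordered determinant `Ψ`. -/
def Psi : MvPolynomial (Fin 3) ℂ :=
  - Matrix.det !![0, pderiv 0 Hdet, pderiv 1 Hdet, pderiv 2 Hdet;
      pderiv 0 Hdet, D 0 0, D 0 1, D 0 2;
      pderiv 1 Hdet, D 0 1, D 1 1, D 1 2;
      pderiv 2 Hdet, D 0 2, D 1 2, D 2 2]

/-- Cayley's second Hessian `H₂(Fer)` (with the corrected coefficient 20 of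
Maugesten–Moe), for `d = deg Fer = 3`. -/
def SecondHessian : MvPolynomial (Fin 3) ℂ :=
  ((12 * 3 ^ 2 - 54 * 3 + 57 : ℤ) : MvPolynomial (Fin 3) ℂ) * Hdet *
      JacRow Fer Hdet (fun u => ∑ j, AdjVec j * pderiv u (HVec j))
    + (((3 - 2) * (12 * 3 - 27) : ℤ) : MvPolynomial (Fin 3) ℂ) * Hdet *
      JacRow Fer Hdet (fun u => ∑ j, pderiv u (AdjVec j) * HVec j)
    - ((20 * (3 - 2) ^ 2 : ℤ) : MvPolynomial (Fin 3) ℂ) *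
      JacRow Fer Hdet (fun u => pderiv u Psi)

/-!
The Hessian matrix of `x³ + y³ + z³` is `diag(6x, 6y, 6z)`, so `H₁ = 216xyz`. In Cayley's
formula for `H₂` the two terms pairing the adjugate of the Hessian matrix with the Hessian of
`H₁` vanish: the first is diagonal, and the second has zero diagonal because `H₁` is a
squarefree monomial. What remains is a multiple of the Jacobian of `F`, `H₁` and `Ψ`, where
`Ψ` is proportional to `x³y³ + y³z³ + z³x³`, and this Jacobian is proportional to
`(x³ - y³)(y³ - z³)(z³ - x³)`.
-/

lemma pderiv_Fer (i : Fin 3) : pderiv i Fer = C 3 * X i ^ 2 := by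
  fin_cases i <;> simp [Fer, pderiv_X, map_ofNat]

lemma hessianMatrix_Fer :
    (Matrix.of fun i j : Fin 3 => pderiv i (pderiv j Fer)) =
      Matrix.diagonal fun i => C 6 * X i := by
  refine Matrix.ext fun i j => ?_
  rw [Matrix.of_apply, pderiv_Fer, pderiv_C_mul, pderiv_pow, pderiv_X, Matrix.diagonal_apply]
  rcases eq_or_ne i j with rfl | hij
  · rw [Pi.single_eq_same, if_pos rfl]
    simp only [map_ofNat]
    ring
  · rw [Pi.single_eq_of_ne hij.symm, if_neg hij, mul_zero, mul_zero]

lemma D_eq_diagonal (i j : Fin 3) : D i j = Matrix.diagonal (fun k => C 6 * X k) i j :=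
  congrFun (congrFun hessianMatrix_Fer i) j

lemma Hdet_eq : Hdet = C 216 * (X 0 * X 1 * X 2) := by
  rw [Hdet, hessianMatrix_Fer, Matrix.det_diagonal, Fin.prod_univ_three]
  simp only [map_ofNat]
  ring

lemma pderiv_zero_Hdet : pderiv 0 Hdet = C 216 * (X 1 * X 2) := by
  simp [Hdet_eq, pderiv_X, mul_comm]

lemma pderiv_one_Hdet : pderiv 1 Hdet = C 216 * (X 0 * X 2) := by
  simp [Hdet_eq, pderiv_X, mul_comm]

lemma pderiv_two_Hdet : pderiv 2 Hdet = C 216 * (X 0 * X 1) := by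
  simp [Hdet_eq, pderiv_X, mul_comm]

lemma AdjVec_eq_zero_or_HVec_eq_zero (j : Fin 6) : AdjVec j = 0 ∨ HVec j = 0 := by
  fin_cases j <;>
    simp [AdjVec, HVec, D_eq_diagonal, pderiv_zero_Hdet, pderiv_one_Hdet, pderiv_two_Hdet, pderiv_X]

lemma JacRow_zero (f g : MvPolynomial (Fin 3) ℂ) : (JacRow f g fun _ => 0) = 0 :=
  Matrix.det_eq_zero_of_row_eq_zero 2 fun _ => rfl

lemma SecondHessian_eq_C_mul_JacRow : SecondHessian = C (-20) * JacRow Fer Hdet fun u => pderiv u Psi := by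
  have hAH (u : Fin 3) : ∑ j, AdjVec j * pderiv u (HVec j) = 0 :=
    Finset.sum_eq_zero fun j _ => by
      rcases AdjVec_eq_zero_or_HVec_eq_zero j with h | h <;> simp [h]
  have hdAH (u : Fin 3) : ∑ j, pderiv u (AdjVec j) * HVec j = 0 :=
    Finset.sum_eq_zero fun j _ => by
      rcases AdjVec_eq_zero_or_HVec_eq_zero j with h | h <;> simp [h]
  simp only [SecondHessian, hAH, hdAH, JacRow_zero]
  simp [map_ofNat]

lemma Psi_eq : Psi = C 1679616 * (X 0 ^ 3 * X 1 ^ 3 + X 1 ^ 3 * X 2 ^ 3 + X 2 ^ 3 * X 0 ^ 3) := by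
  rw [Psi, pderiv_zero_Hdet, pderiv_one_Hdet, pderiv_two_Hdet, Matrix.det_succ_row_zero,
    Fin.sum_univ_four]
  simp only [Matrix.det_fin_three, Matrix.submatrix_apply, Matrix.of_apply, Matrix.cons_val,
    Fin.succAbove, Fin.reduceLT, Fin.reduceSucc, Fin.reduceCastSucc, ↓reduceIte,
    D_eq_diagonal, Matrix.diagonal, Fin.reduceEq, Fin.coe_ofNat_eq_mod]
  simp only [map_ofNat]
  ring

lemma JacRow_Fer_Hdet_pderiv_Psi : (JacRow Fer Hdet fun u => pderiv u Psi) =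
    C 3265173504 * ((X 0 ^ 3 - X 1 ^ 3) * (X 1 ^ 3 - X 2 ^ 3) * (X 2 ^ 3 - X 0 ^ 3)) := by
  rw [JacRow, Matrix.det_fin_three]
  simp only [Matrix.of_apply, Matrix.cons_val, pderiv_Fer, pderiv_zero_Hdet, pderiv_one_Hdet,
    pderiv_two_Hdet, Psi_eq, map_add, pderiv_mul, pderiv_pow, pderiv_X, pderiv_C, Pi.single_apply,
    Fin.reduceEq, ↓reduceIte]
  simp only [map_ofNat]
  ring

lemma SecondHessian_eq_C_mul : SecondHessian =
    C (-65303470080) * ((X 0 ^ 3 - X 1 ^ 3) * (X 1 ^ 3 - X 2 ^ 3) * (X 2 ^ 3 - X 0 ^ 3)) := by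
  rw [SecondHessian_eq_C_mul_JacRow, JacRow_Fer_Hdet_pderiv_Psi, ← mul_assoc, ← C_mul]
  norm_num

/-- The product of the Hessian and the second Hessian of the Fermat cubic is, up to a
nonzero scalar, `xyz(x³-y³)(y³-z³)(z³-x³)`, defining the extended Fermat arrangement
of 12 lines. -/
theorem hessians_product_fermat :
    ∃ c : ℂ, c ≠ 0 ∧ Hdet * SecondHessian =
      C c * (X 0 * X 1 * X 2 *
        (((X 0) ^ 3 - (X 1) ^ 3) * ((X 1) ^ 3 - (X 2) ^ 3) * ((X 2) ^ 3 - (X 0) ^ 3))) := by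
  refine ⟨216 * -65303470080, by norm_num, ?_⟩
  rw [Hdet_eq, SecondHessian_eq_C_mul, C_mul]
  ring
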